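/- There is no completely regular code with intersection array {36,28,4; 1,2,24} in any Hamming graph H(n,q) with q ∈ {2,3,4,5,7,10,13} and (q−1)n = 36, because in each case the matrix K_3(K_1^{-1}(S)) has a non-integer entry, where S is the 4×4 tridiagonal quotient matrix determined by the array. -/

import Mathlib

open SimpleGraph

/-- The Hamming graph `H(n, α)`: vertices are `n`-tuples over `α`, adjacent iff
Hamming distance `1`. -/
def hammingGraph (n : ℕ) (α : Type*) [DecidableEq α] : SimpleGraph (Fin n → α) where
  Adj x y := hammingDist x y = 1
  symm := by constructor; intro x y h; exact (hammingDist_comm y x).trans h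
  loopless := by constructor; intro x h; simp [hammingDist_self] at h

/-- Distance from a vertex to a set of vertices. -/
noncomputable def distTo {V : Type*} (Γ : SimpleGraph V) (C : Set V) (v : V) : ℕ :=
  sInf (Γ.dist v '' C)

/-- `C` is a completely regular code of covering radius `ρ` with intersection array
`{β 0, …, β (ρ-1); γ 1, …, γ ρ}`: the distance partition of `C` is equitable with the
corresponding tridiagonal quotient matrix. -/
def IsCompletelyRegular {V : Type*} (Γ : SimpleGraph V) (C : Set V) (ρ : ℕ)
    (β γ : ℕ → ℕ) : Prop :=
  C.Nonempty ∧
  (∀ v, distTo Γ C v ≤ ρ) ∧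
  (∃ v, distTo Γ C v = ρ) ∧
  (∀ v t, distTo Γ C v = t → t < ρ →
    {u | Γ.Adj v u ∧ distTo Γ C u = t + 1}.ncard = β t) ∧
  (∀ v t, distTo Γ C v = t → 0 < t →
    {u | Γ.Adj v u ∧ distTo Γ C u = t - 1}.ncard = γ t)

/-- `Γ` is a distance-regular graph of diameter `D` with intersection numbers
`b 0, …, b (D-1)` and `c 1, …, c D`. -/
def IsDistanceRegular {V : Type*} (Γ : SimpleGraph V) (D : ℕ) (b c : ℕ → ℕ) : Prop :=
  Γ.Connected ∧
  (∀ u v, Γ.dist u v ≤ D) ∧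
  (∃ u v, Γ.dist u v = D) ∧
  (∀ u v i, Γ.dist u v = i → i < D →
    {w | Γ.Adj v w ∧ Γ.dist u w = i + 1}.ncard = b i) ∧
  (∀ u v i, Γ.dist u v = i → 0 < i →
    {w | Γ.Adj v w ∧ Γ.dist u w = i - 1}.ncard = c i)

/-! Write `f_w(v)` for the number of codewords at Hamming distance `w` from `v`. Double counting
over the neighbours of `v` gives the three-term recurrence
`∑_{u ~ v} f_{w+1}(u) = (n-w)(q-1) f_w(v) + (w+2) f_{w+2}(v) + (w+1)(q-2) f_{w+1}(v)`
coming from the intersection numbers of `H(n,q)`. If `C` is completely regular, `f_0` and `f_1`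
depend only on the level `t` of `v` in the distance partition of `C`, and summing a function of
the level over the neighbours of `v` is multiplication by the quotient matrix `S`. Hence each
`f_w(v)` is a function of `t` (the `(t, 0)` entry of `K_w(K_1⁻¹(S))`), read off from the
recurrence after dividing by `w + 1`. For the array `{36,28,4; 1,2,24}` the division by `2` fails
at level `1` unless `q ∈ {3,5,7}`, and then the division by `3` fails (at level `2` for `q = 3`,
at level `1` for `q = 5, 7`). -/

open Finset Function

section HammingSpace

variable {n : ℕ} {α : Type*} [DecidableEq α]

theorem hammingDist_update_add (x y : Fin n → α) (i : Fin n) (a : α) :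
    hammingDist (update x i a) y + (if x i = y i then 0 else 1)
      = hammingDist x y + (if a = y i then 0 else 1) := by
  simp only [hammingDist, card_filter, ← add_sum_erase _ _ (mem_univ i), update_self]
  have : ∑ j ∈ univ.erase i, (if update x i a j ≠ y j then 1 else 0)
      = ∑ j ∈ univ.erase i, (if x j ≠ y j then 1 else 0) :=
    sum_congr rfl fun j hj => by rw [update_of_ne (ne_of_mem_erase hj)]
  rw [this]
  split_ifs <;> simp_all <;> omega

theorem hammingDist_update_self {x : Fin n → α} {i : Fin n} {a : α} (ha : a ≠ x i) :
    hammingDist x (update x i a) = 1 := by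
  have := hammingDist_update_add x x i a
  simp_all [hammingDist_comm x]

theorem hammingDist_update_of_ne {x y : Fin n → α} {i : Fin n} (h : x i ≠ y i) :
    hammingDist (update x i (y i)) y + 1 = hammingDist x y := by
  simpa [h] using hammingDist_update_add x y i (y i)

theorem exists_update_of_hammingDist_eq_one {x u : Fin n → α} (h : hammingDist x u = 1) :
    ∃ i, u i ≠ x i ∧ u = update x i (u i) := by
  obtain ⟨i, hi⟩ := card_eq_one.1 h
  have hdiff : ∀ j, x j ≠ u j ↔ j = i := fun j => by
    simpa using congrArg (j ∈ ·) hi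
  refine ⟨i, fun h => (hdiff i).2 rfl h.symm, funext fun j => ?_⟩
  by_cases hj : j = i
  · subst hj; simp
  · rw [update_of_ne hj]; exact (not_not.1 (mt (hdiff j).1 hj)).symm

variable [Fintype α]

theorem card_filter_hammingDist_eq_one (v : Fin n → α) (p : (Fin n → α) → Prop)
    [DecidablePred p] :
    #{u | hammingDist v u = 1 ∧ p u} = ∑ i, #{a | a ≠ v i ∧ p (update v i a)} := by
  rw [← card_sigma]
  refine (card_bij (fun x _ => update v x.1 x.2) ?_ ?_ ?_).symm
  · rintro ⟨i, a⟩ hx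
    simp only [mem_sigma, mem_filter, mem_univ, true_and] at hx ⊢
    exact ⟨hammingDist_update_self hx.1, hx.2⟩
  · rintro ⟨i, a⟩ hx ⟨i', a'⟩ _ heq
    simp only [mem_sigma, mem_filter, mem_univ, true_and] at hx
    have hi : i = i' := by
      by_contra hii
      have := congrFun heq i
      rw [update_self, update_of_ne hii] at this
      exact hx.1 this
    subst hi
    simpa using congrFun heq i
  · intro u hu
    simp only [mem_filter, mem_univ, true_and] at hu
    obtain ⟨i, hi, hu'⟩ := exists_update_of_hammingDist_eq_one hu.1
    exact ⟨⟨i, u i⟩, by simp [hi, ← hu', hu.2], hu'.symm⟩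

theorem card_update_hammingDist_of_eq {v c : Fin n → α} {i : Fin n} (hvc : v i = c i) (w : ℕ) :
    #{a | a ≠ v i ∧ hammingDist (update v i a) c = w + 1}
      = if hammingDist v c = w then Fintype.card α - 1 else 0 := by
  have hdist : ∀ a, a ≠ v i → hammingDist (update v i a) c = hammingDist v c + 1 := fun a ha => by
    simpa [hvc, hvc ▸ ha] using hammingDist_update_add v c i a
  rw [filter_congr fun a _ => and_congr_right fun ha => by
    rw [hdist a ha, Nat.add_right_cancel_iff], filter_and]
  split_ifs with hw <;> simp [hw, filter_ne']

theorem card_update_hammingDist_of_ne {v c : Fin n → α} {i : Fin n} (hvc : v i ≠ c i) (w : ℕ) :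
    #{a | a ≠ v i ∧ hammingDist (update v i a) c = w + 1}
      = (if hammingDist v c = w + 2 then 1 else 0)
        + (if hammingDist v c = w + 1 then Fintype.card α - 2 else 0) := by
  have hdist : ∀ a, hammingDist (update v i a) c + 1 = hammingDist v c + if a = c i then 0 else 1 :=
    fun a => by simpa [hvc] using hammingDist_update_add v c i a
  have hsplit : ∀ a, (a ≠ v i ∧ hammingDist (update v i a) c = w + 1) ↔
      (a = c i ∧ hammingDist v c = w + 2 ∨ a ≠ v i ∧ a ≠ c i ∧ hammingDist v c = w + 1) := by
    intro a
    have := hdist a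
    by_cases hac : a = c i
    · subst hac; simp only [if_true] at this; simp [Ne.symm hvc]; omega
    · simp only [hac, if_false] at this; simp [hac]; omega
  rw [filter_congr fun a _ => hsplit a, filter_or, card_union_of_disjoint]
  · by_cases h₂ : hammingDist v c = w + 2
    · simp [h₂, filter_eq']
    by_cases h₁ : hammingDist v c = w + 1
    · have hv : v i ∈ univ.erase (c i) := mem_erase.2 ⟨hvc, mem_univ _⟩
      have : ({a | a ≠ v i ∧ a ≠ c i} : Finset α) = (univ.erase (c i)).erase (v i) := by
        ext; simp [and_comm]
      simp [h₁, this, card_erase_of_mem hv]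
      omega
    · simp [h₁, h₂]
  · exact disjoint_filter.2 fun a _ h h' => h'.2.1 h.1

theorem card_hammingDist_eq_one_hammingDist_eq_succ (v c : Fin n → α) (w : ℕ) :
    #{u | hammingDist v u = 1 ∧ hammingDist u c = w + 1}
      = (n - w) * (Fintype.card α - 1) * (if hammingDist v c = w then 1 else 0)
        + (w + 2) * (if hammingDist v c = w + 2 then 1 else 0)
        + (w + 1) * (Fintype.card α - 2) * (if hammingDist v c = w + 1 then 1 else 0) := by
  have hcoord : ∀ i, #{a | a ≠ v i ∧ hammingDist (update v i a) c = w + 1}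
      = if v i = c i then (if hammingDist v c = w then Fintype.card α - 1 else 0)
        else (if hammingDist v c = w + 2 then 1 else 0)
          + (if hammingDist v c = w + 1 then Fintype.card α - 2 else 0) := fun i => by
    by_cases hvc : v i = c i
    · rw [if_pos hvc, card_update_hammingDist_of_eq hvc w]
    · rw [if_neg hvc, card_update_hammingDist_of_ne hvc w]
  rw [card_filter_hammingDist_eq_one, sum_congr rfl fun i _ => hcoord i, sum_ite, sum_const,
    sum_const]
  have hd : #{i | ¬v i = c i} = hammingDist v c := rfl
  have hnd : #{i | v i = c i} = n - hammingDist v c := by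
    have := card_filter_add_card_filter_not (s := univ) fun i => v i = c i
    simp only [card_univ, Fintype.card_fin] at this
    omega
  rw [hd, hnd, smul_eq_mul, smul_eq_mul]
  generalize hammingDist v c = d
  split_ifs <;> subst_vars <;> first | omega | ring

variable (C : Set (Fin n → α)) [DecidablePred (· ∈ C)]

def countAtDist (v : Fin n → α) (w : ℕ) : ℕ := #{c | c ∈ C ∧ hammingDist v c = w}

theorem countAtDist_zero (v : Fin n → α) : countAtDist C v 0 = if v ∈ C then 1 else 0 := by
  simp only [countAtDist, hammingDist_eq_zero, filter_and, filter_eq, mem_univ, if_true,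
    inter_singleton, mem_filter, true_and]
  split_ifs <;> rfl

theorem sum_countAtDist_succ (v : Fin n → α) (w : ℕ) :
    ∑ u with hammingDist v u = 1, countAtDist C u (w + 1)
      = (n - w) * (Fintype.card α - 1) * countAtDist C v w + (w + 2) * countAtDist C v (w + 2)
        + (w + 1) * (Fintype.card α - 2) * countAtDist C v (w + 1) := by
  have hcount : ∀ v w, countAtDist C v w = ∑ c with c ∈ C, if hammingDist v c = w then 1 else 0 :=
    fun v w => by rw [countAtDist, ← filter_filter, card_filter]
  simp only [hcount]
  rw [sum_comm]
  simp only [← card_filter, filter_filter, card_hammingDist_eq_one_hammingDist_eq_succ,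
    sum_add_distrib, ← mul_sum]

end HammingSpace

section HammingGraph

variable {n : ℕ} {α : Type*} [DecidableEq α]

instance : DecidableRel (hammingGraph n α).Adj :=
  fun x y => inferInstanceAs (Decidable (hammingDist x y = 1))

theorem hammingGraph_preconnected : (hammingGraph n α).Preconnected := by
  intro x y
  induction h : hammingDist x y generalizing x with
  | zero => rw [hammingDist_eq_zero.1 h]
  | succ d ih =>
    obtain ⟨i, hi⟩ : ∃ i, x i ≠ y i := by
      by_contra! hxy
      rw [funext hxy, hammingDist_self] at h
      exact d.succ_ne_zero h.symm
    have hadj : (hammingGraph n α).Adj x (update x i (y i)) :=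
      hammingDist_update_self hi.symm
    exact hadj.reachable.trans (ih _ (by have := hammingDist_update_of_ne hi; omega))

theorem hammingGraph_isRegularOfDegree [Fintype α] :
    (hammingGraph n α).IsRegularOfDegree (n * (Fintype.card α - 1)) := by
  intro v
  rw [← card_neighborFinset_eq_degree, neighborFinset_eq_filter]
  have := card_filter_hammingDist_eq_one v fun _ => True
  simp only [and_true] at this
  exact this.trans (by simp [filter_ne'])

end HammingGraph

section DistTo

variable {V : Type*} {Γ : SimpleGraph V} {C : Set V}

theorem distTo_le_dist {v c : V} (hc : c ∈ C) : distTo Γ C v ≤ Γ.dist v c :=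
  Nat.sInf_le ⟨c, hc, rfl⟩

theorem exists_dist_eq_distTo (hC : C.Nonempty) (v : V) : ∃ c ∈ C, Γ.dist v c = distTo Γ C v :=
  Nat.sInf_mem (hC.image _)

theorem distTo_eq_zero_iff (hΓ : Γ.Preconnected) (hC : C.Nonempty) {v : V} :
    distTo Γ C v = 0 ↔ v ∈ C := by
  refine ⟨fun h => ?_, fun hv => Nat.eq_zero_of_le_zero ?_⟩
  · obtain ⟨c, hc, hvc⟩ := exists_dist_eq_distTo (Γ := Γ) hC v
    rwa [(hΓ v c).dist_eq_zero_iff.1 (hvc.trans h)]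
  · simpa using distTo_le_dist (Γ := Γ) (v := v) hv

theorem distTo_le_distTo_add_one (hC : C.Nonempty) {u v : V} (h : Γ.Adj u v) :
    distTo Γ C u ≤ distTo Γ C v + 1 := by
  obtain ⟨c, hc, hvc⟩ := exists_dist_eq_distTo (Γ := Γ) hC v
  calc distTo Γ C u ≤ Γ.dist u c := distTo_le_dist hc
    _ ≤ Γ.dist u v + Γ.dist v c := h.reachable.dist_triangle_left c
    _ = distTo Γ C v + 1 := by rw [dist_eq_one_iff_adj.2 h, hvc, add_comm]

variable [Fintype V] [DecidableRel Γ.Adj]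

theorem card_adj_distTo_eq_zero (hC : C.Nonempty) {v : V} {s : ℕ} (h₁ : s ≠ distTo Γ C v + 1)
    (h₂ : s + 1 ≠ distTo Γ C v) (h₃ : s ≠ distTo Γ C v) :
    #{u | Γ.Adj v u ∧ distTo Γ C u = s} = 0 :=
  card_eq_zero.2 <| filter_eq_empty_iff.2 fun u _ hu => by
    have := distTo_le_distTo_add_one hC hu.1
    have := distTo_le_distTo_add_one hC hu.1.symm
    omega

end DistTo

theorem SimpleGraph.ncard_setOf_adj {V : Type*} [Fintype V] (Γ : SimpleGraph V)
    [DecidableRel Γ.Adj] (v : V) (p : V → Prop) [DecidablePred p] :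
    {u | Γ.Adj v u ∧ p u}.ncard = #{u | Γ.Adj v u ∧ p u} := by
  rw [Set.ncard_eq_toFinset_card', Set.toFinset_ofPred]

def intersectionMatrix (k ρ : ℕ) (β γ : ℕ → ℕ) : Matrix (Fin (ρ + 1)) (Fin (ρ + 1)) ℕ :=
  Matrix.of fun t s =>
    if (s : ℕ) = t + 1 then β t
    else if (s : ℕ) + 1 = t then γ t
    else if s = t then k - (if (t : ℕ) < ρ then β t else 0) - (if (t : ℕ) = 0 then 0 else γ t)
    else 0

def IsQuotientMatrix {V : Type*} (Γ : SimpleGraph V) (C : Set V) {ρ : ℕ}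
    (S : Matrix (Fin (ρ + 1)) (Fin (ρ + 1)) ℕ) : Prop :=
  (∀ v, distTo Γ C v ≤ ρ) ∧
  ∀ v (t s : Fin (ρ + 1)), distTo Γ C v = t → {u | Γ.Adj v u ∧ distTo Γ C u = s}.ncard = S t s

namespace IsCompletelyRegular

variable {V : Type*} [Fintype V] {Γ : SimpleGraph V} [DecidableRel Γ.Adj] {C : Set V} {ρ : ℕ}
  {β γ : ℕ → ℕ}

theorem card_adj_distTo_succ (hcr : IsCompletelyRegular Γ C ρ β γ) (v : V) :
    #{u | Γ.Adj v u ∧ distTo Γ C u = distTo Γ C v + 1}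
      = if distTo Γ C v < ρ then β (distTo Γ C v) else 0 := by
  split_ifs with h
  · rw [← Γ.ncard_setOf_adj]; exact hcr.2.2.2.1 v _ rfl h
  · exact card_eq_zero.2 <| filter_eq_empty_iff.2 fun u _ hu => by have := hcr.2.1 u; omega

theorem card_adj_distTo_pred (hcr : IsCompletelyRegular Γ C ρ β γ) (v : V) :
    #{u | Γ.Adj v u ∧ distTo Γ C u + 1 = distTo Γ C v}
      = if distTo Γ C v = 0 then 0 else γ (distTo Γ C v) := by
  split_ifs with h
  · exact card_eq_zero.2 <| filter_eq_empty_iff.2 fun u _ hu => by omega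
  · rw [← hcr.2.2.2.2 v _ rfl (Nat.pos_of_ne_zero h), Γ.ncard_setOf_adj]
    exact congrArg card <| filter_congr fun u _ => and_congr_right fun _ => by omega

theorem card_adj_distTo_self {k : ℕ} (hk : Γ.IsRegularOfDegree k)
    (hcr : IsCompletelyRegular Γ C ρ β γ) (v : V) :
    #{u | Γ.Adj v u ∧ distTo Γ C u = distTo Γ C v}
      = k - (if distTo Γ C v < ρ then β (distTo Γ C v) else 0)
        - (if distTo Γ C v = 0 then 0 else γ (distTo Γ C v)) := by
  classical
  have hsucc := hcr.card_adj_distTo_succ v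
  have hpred := hcr.card_adj_distTo_pred v
  set t := distTo Γ C v
  have hdeg : #(filter (Γ.Adj v) univ) = k := by
    rw [← hk v, ← card_neighborFinset_eq_degree, neighborFinset_eq_filter]
  have hne : #{u | Γ.Adj v u ∧ ¬distTo Γ C u = t}
      = #{u | Γ.Adj v u ∧ distTo Γ C u = t + 1} + #{u | Γ.Adj v u ∧ distTo Γ C u + 1 = t} := by
    rw [← card_union_of_disjoint, ← filter_or]
    · refine congrArg card <| filter_congr fun u _ => ⟨fun ⟨h, h'⟩ => ?_, ?_⟩
      · have := distTo_le_distTo_add_one hcr.1 h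
        have := distTo_le_distTo_add_one hcr.1 h.symm
        rcases Nat.lt_or_gt_of_ne h' with hlt | hgt
        exacts [Or.inr ⟨h, by omega⟩, Or.inl ⟨h, by omega⟩]
      · rintro (⟨h, h'⟩ | ⟨h, h'⟩) <;> exact ⟨h, by omega⟩
    · exact disjoint_filter.2 fun u _ h h' => by have := h.2; have := h'.2; omega
  have hsplit := card_filter_add_card_filter_not (s := filter (Γ.Adj v) univ)
    fun u => distTo Γ C u = t
  simp only [filter_filter] at hsplit
  split_ifs at hsucc hpred ⊢ <;> omega

theorem isQuotientMatrix {k : ℕ} (hk : Γ.IsRegularOfDegree k)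
    (hcr : IsCompletelyRegular Γ C ρ β γ) : IsQuotientMatrix Γ C (intersectionMatrix k ρ β γ) := by
  refine ⟨hcr.2.1, fun v t s hv => ?_⟩
  rw [Γ.ncard_setOf_adj, intersectionMatrix, Matrix.of_apply]
  by_cases h₁ : (s : ℕ) = t + 1
  · rw [if_pos h₁]
    have := hcr.card_adj_distTo_succ v
    rwa [hv, if_pos (by omega), ← h₁] at this
  by_cases h₂ : (s : ℕ) + 1 = t
  · have := hcr.card_adj_distTo_pred v
    rw [hv, if_neg (by omega)] at this
    rw [if_neg h₁, if_pos h₂, ← this]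
    exact congrArg card <| filter_congr fun u _ => and_congr_right fun _ => by omega
  rw [if_neg h₁, if_neg h₂]
  by_cases h₃ : s = t
  · rw [if_pos h₃, h₃, ← hv]
    exact hcr.card_adj_distTo_self hk v
  · rw [if_neg h₃]
    exact card_adj_distTo_eq_zero hcr.1 (by omega) (by omega) (by omega)

end IsCompletelyRegular

namespace IsQuotientMatrix

variable {V : Type*} {Γ : SimpleGraph V} {C : Set V} {ρ : ℕ}
  {S : Matrix (Fin (ρ + 1)) (Fin (ρ + 1)) ℕ}

noncomputable def level (hS : IsQuotientMatrix Γ C S) (v : V) : Fin (ρ + 1) :=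
  ⟨distTo Γ C v, Nat.lt_succ_of_le (hS.1 v)⟩

theorem level_eq_zero_iff (hS : IsQuotientMatrix Γ C S) (hΓ : Γ.Preconnected)
    (hC : C.Nonempty) {v : V} : hS.level v = 0 ↔ v ∈ C := by
  rw [← distTo_eq_zero_iff hΓ hC, level, Fin.ext_iff]
  rfl

variable [Fintype V] [DecidableRel Γ.Adj]

theorem card_adj_level (hS : IsQuotientMatrix Γ C S) (v : V) (s : Fin (ρ + 1)) :
    #{u | Γ.Adj v u ∧ hS.level u = s} = S (hS.level v) s := by
  rw [← hS.2 v _ s rfl, Γ.ncard_setOf_adj]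
  simp only [level, Fin.ext_iff]

theorem sum_adj_level (hS : IsQuotientMatrix Γ C S) (F : Fin (ρ + 1) → ℕ) (v : V) :
    ∑ u with Γ.Adj v u, F (hS.level u) = ∑ s, S (hS.level v) s * F s := by
  rw [← sum_fiberwise' _ hS.level F]
  simp only [sum_const, filter_filter, hS.card_adj_level, smul_eq_mul]

theorem exists_level_eq_of_pos (hS : IsQuotientMatrix Γ C S) {v : V} {s : Fin (ρ + 1)}
    (h : 0 < S (hS.level v) s) : ∃ u, hS.level u = s := by
  rw [← hS.card_adj_level] at h
  obtain ⟨u, hu⟩ := card_pos.1 h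
  exact ⟨u, (mem_filter.1 hu).2.2⟩

end IsQuotientMatrix

/-- The value of `countAtDist C v 2` at level `t` forced by `sum_mul_eq_countAtDist_two`, i.e. the
`(t, 0)` entry of `K_2(K_1⁻¹(S))`. In `ℕ` it is only meaningful when the subtractions do not
truncate and the division is exact. -/
def countAtDistTwo {ρ : ℕ} (n q : ℕ) (S : Matrix (Fin (ρ + 1)) (Fin (ρ + 1)) ℕ)
    (t : Fin (ρ + 1)) : ℕ :=
  (∑ s, S t s * S s 0 - n * (q - 1) * (if t = 0 then 1 else 0) - (q - 2) * S t 0) / 2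

namespace IsQuotientMatrix

variable {n : ℕ} {α : Type*} [Fintype α] [DecidableEq α] {C : Set (Fin n → α)}
  [DecidablePred (· ∈ C)] {ρ : ℕ} {S : Matrix (Fin (ρ + 1)) (Fin (ρ + 1)) ℕ}

theorem countAtDist_one (hS : IsQuotientMatrix (hammingGraph n α) C S) (hC : C.Nonempty)
    (v : Fin n → α) : countAtDist C v 1 = S (hS.level v) 0 := by
  rw [← hS.card_adj_level, countAtDist]
  refine congrArg card <| filter_congr fun u _ => ?_
  rw [hS.level_eq_zero_iff hammingGraph_preconnected hC, and_comm]
  rfl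

theorem sum_mul_eq_countAtDist (hS : IsQuotientMatrix (hammingGraph n α) C S) (w : ℕ)
    (F : Fin (ρ + 1) → ℕ) (hF : ∀ u, countAtDist C u (w + 1) = F (hS.level u)) (v : Fin n → α) :
    ∑ s, S (hS.level v) s * F s
      = (n - w) * (Fintype.card α - 1) * countAtDist C v w + (w + 2) * countAtDist C v (w + 2)
        + (w + 1) * (Fintype.card α - 2) * F (hS.level v) := by
  rw [← hF v, ← sum_countAtDist_succ, ← hS.sum_adj_level]
  exact sum_congr rfl fun u _ => (hF u).symm

theorem sum_mul_eq_countAtDist_two (hS : IsQuotientMatrix (hammingGraph n α) C S)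
    (hC : C.Nonempty) (v : Fin n → α) :
    ∑ s, S (hS.level v) s * S s 0
      = n * (Fintype.card α - 1) * (if hS.level v = 0 then 1 else 0) + 2 * countAtDist C v 2
        + (Fintype.card α - 2) * S (hS.level v) 0 := by
  simpa [countAtDist_zero, ← hS.level_eq_zero_iff hammingGraph_preconnected hC] using
    hS.sum_mul_eq_countAtDist 0 _ (hS.countAtDist_one hC) v

theorem countAtDist_two_eq (hS : IsQuotientMatrix (hammingGraph n α) C S) (hC : C.Nonempty)
    (v : Fin n → α) : countAtDist C v 2 = countAtDistTwo n (Fintype.card α) S (hS.level v) := by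
  have := hS.sum_mul_eq_countAtDist_two hC v
  rw [countAtDistTwo]
  generalize ∑ s, S (hS.level v) s * S s 0 = X at this ⊢
  generalize n * (Fintype.card α - 1) * (if hS.level v = 0 then 1 else 0) = Y at this ⊢
  generalize (Fintype.card α - 2) * S (hS.level v) 0 = Z at this ⊢
  omega

end IsQuotientMatrix

theorem intersectionMatrix_36_28_4 {β γ : ℕ → ℕ} (hβ0 : β 0 = 36) (hβ1 : β 1 = 28)
    (hβ2 : β 2 = 4) (hγ1 : γ 1 = 1) (hγ2 : γ 2 = 2) (hγ3 : γ 3 = 24) :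
    intersectionMatrix 36 3 β γ = !![0, 36, 0, 0; 1, 7, 28, 0; 0, 2, 30, 4; 0, 0, 24, 12] := by
  ext t s
  fin_cases t <;> fin_cases s <;> simp [intersectionMatrix, hβ0, hβ1, hβ2, hγ1, hγ2, hγ3]

/-- There is no completely regular code with intersection array `{36,28,4; 1,2,24}` in
any Hamming graph `H(n,q)` with `q ∈ {2,3,4,5,7,10,13}` and degree `(q-1)n = 36`
(in each case the matrix `K_3(K_1⁻¹(S))` has a non-integer entry). -/
theorem no_crc_36_28_4 (q n : ℕ) (hq : q ∈ ({2, 3, 4, 5, 7, 10, 13} : Set ℕ))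
    (hn : (q - 1) * n = 36)
    (C : Set (Fin n → Fin q)) (β γ : ℕ → ℕ)
    (hβ0 : β 0 = 36) (hβ1 : β 1 = 28) (hβ2 : β 2 = 4)
    (hγ1 : γ 1 = 1) (hγ2 : γ 2 = 2) (hγ3 : γ 3 = 24) :
    ¬ IsCompletelyRegular (hammingGraph n (Fin q)) C 3 β γ := by
  classical
  intro hcr
  have hk : (hammingGraph n (Fin q)).IsRegularOfDegree 36 := by
    simpa [mul_comm n, hn] using hammingGraph_isRegularOfDegree (n := n) (α := Fin q)
  have hS := hcr.isQuotientMatrix hk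
  rw [intersectionMatrix_36_28_4 hβ0 hβ1 hβ2 hγ1 hγ2 hγ3] at hS
  have hC := hcr.1
  obtain ⟨c, hc⟩ := id hC
  obtain ⟨v₁, hv₁⟩ := hS.exists_level_eq_of_pos (v := c) (s := 1)
    (by simp [(hS.level_eq_zero_iff hammingGraph_preconnected hC).2 hc])
  obtain ⟨v₂, hv₂⟩ := hS.exists_level_eq_of_pos (v := v₁) (s := 2) (by simp [hv₁])
  have h₁ := hS.sum_mul_eq_countAtDist_two hC v₁
  have h₂ := hS.sum_mul_eq_countAtDist 1 _ (hS.countAtDist_two_eq hC)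
  have h₂v₁ := h₂ v₁
  have h₂v₂ := h₂ v₂
  simp only [Set.mem_insert_iff, Set.mem_singleton_iff] at hq
  rcases hq with rfl | rfl | rfl | rfl | rfl | rfl | rfl <;>
    simp [hv₁, hv₂, countAtDistTwo, Fin.sum_univ_four, hS.countAtDist_one hC] at h₁ h₂v₁ h₂v₂ <;>
    omega
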